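/- Every substitution subterm arising during λ_lca reduction of an initialised term is closed: if T is an initialised labelled λ_c-term satisfying the linearity constraints and T →_lca* T', then every subterm of T' of the form M[N/x] satisfies FV(N) = ∅; moreover T' satisfies the linearity constraints and FV(T') = FV(T). -/

import Mathlib

/-- Exponential markers E ∈ {D, !, ?, R, S, W}. -/
inductive Marker : Type
  | D | bang | quest | R | S | W
deriving DecidableEq, Repr

/-- Labels: α, β ::= a | α·β | overline α | underline α | →E | ←E. -/
inductive Lab : Type
  | atom : ℕ → Lab
  | comp : Lab → Lab → Lab
  | over : Lab → Lab
  | under : Lab → Lab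
  | fwd : Marker → Lab
  | bwd : Marker → Lab
deriving DecidableEq, Repr

/-- Label reversal (·)^r. -/
def Lab.rev : Lab → Lab
  | .atom a => .atom a
  | .comp α β => .comp β.rev α.rev
  | .over α => .over α.rev
  | .under α => .under α.rev
  | .fwd E => .bwd E
  | .bwd E => .fwd E

/-- Labelled λ_c-terms: variables, abstractions and applications carry a label;
δ-, ε- and substitution terms carry no label.  `sub M N x` is M[N/x],
`dup x y z M` is δ_x^{y,z}.M and `eps x M` is ε_x.M. -/
inductive Term : Type
  | var : ℕ → Lab → Term
  | lam : ℕ → Term → Lab → Term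
  | app : Term → Term → Lab → Term
  | eps : ℕ → Term → Term
  | dup : ℕ → ℕ → ℕ → Term → Term
  | sub : Term → Term → ℕ → Term
deriving DecidableEq, Repr

/-- Free variables. -/
def FV : Term → Finset ℕ
  | .var x _ => {x}
  | .lam x M _ => FV M \ {x}
  | .app M N _ => FV M ∪ FV N
  | .eps x M => FV M ∪ {x}
  | .dup x y z M => (FV M \ {y, z}) ∪ {x}
  | .sub M N x => (FV M \ {x}) ∪ FV N

/-- The linearity (variable) constraints on λ_c-terms. -/
def Wf : Term → Prop
  | .var _ _ => True
  | .lam x M _ => x ∈ FV M ∧ Wf M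
  | .app M N _ => FV M ∩ FV N = ∅ ∧ Wf M ∧ Wf N
  | .eps x M => x ∉ FV M ∧ Wf M
  | .dup x y z M => x ∉ FV M ∧ y ≠ z ∧ y ∈ FV M ∧ z ∈ FV M ∧ Wf M
  | .sub M N x => x ∈ FV M ∧ (FV M \ {x}) ∩ FV N = ∅ ∧ Wf M ∧ Wf N

/-- The prefixing operation β • T. -/
def pre (β : Lab) : Term → Term
  | .var x α => .var x (.comp β α)
  | .lam x M α => .lam x M (.comp β α)
  | .app M N α => .app M N (.comp β α)
  | .eps x M => .eps x (pre β M)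
  | .dup x y z M => .dup x y z (pre β M)
  | .sub M N x => .sub (pre β M) N x

/-- The substitution (σ) rules of λ_lcf, applied at the root. -/
inductive SigmaLcf : Term → Term → Prop
  | lam {y M α N x} : FV N = ∅ →
      SigmaLcf (.sub (.lam y M α) N x) (.lam y (.sub M (pre (.fwd .quest) N) x) α)
  | app1 {M N α P x} : x ∈ FV M →
      SigmaLcf (.sub (.app M N α) P x) (.app (.sub M P x) N α)
  | app2 {M N α P x} : x ∈ FV N →
      SigmaLcf (.sub (.app M N α) P x) (.app M (.sub N P x) α)
  | cpy1 {x y z M N} : FV N = ∅ →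
      SigmaLcf (.sub (.dup x y z M) N x)
        (.sub (.sub M (pre (.fwd .R) N) y) (pre (.fwd .S) N) z)
  | cpy2 {x y z M N x'} : x' ≠ x →
      SigmaLcf (.sub (.dup x y z M) N x') (.dup x y z (.sub M N x'))
  | ers1 {x M N} : FV N = ∅ →
      SigmaLcf (.sub (.eps x M) N x) M
  | ers2 {x M N x'} : x' ≠ x →
      SigmaLcf (.sub (.eps x M) N x') (.eps x (.sub M N x'))
  | var {x α N} :
      SigmaLcf (.sub (.var x α) N x) (pre α N)
  | cmp {M P y N x} : x ∈ FV P →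
      SigmaLcf (.sub (.sub M P y) N x) (.sub M (.sub P N x) y)

/-- The label →D·α·←! used in the Beta rule of λ_lcf. -/
def dPhi (α : Lab) : Lab := .comp (.fwd .D) (.comp α (.bwd .bang))

/-- The Beta rule of λ_lcf, applied at the root:
((λx.M)^α N)^β → β·overline(→D·α·←!) • M[underline((→D·α·←!)^r) • N / x],
provided the function part is closed. -/
inductive BetaLcf : Term → Term → Prop
  | beta {x M α N β} : FV (Term.lam x M α) = ∅ →
      BetaLcf (.app (.lam x M α) N β)
        (pre (.comp β (.over (dPhi α)))
          (.sub M (pre (.under (Lab.rev (dPhi α))) N) x))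

/-- Closure of a root relation under arbitrary contexts. -/
inductive Ctx (r : Term → Term → Prop) : Term → Term → Prop
  | base {M N} : r M N → Ctx r M N
  | lam {x M M' α} : Ctx r M M' → Ctx r (.lam x M α) (.lam x M' α)
  | appL {M M' N α} : Ctx r M M' → Ctx r (.app M N α) (.app M' N α)
  | appR {M N N' α} : Ctx r N N' → Ctx r (.app M N α) (.app M N' α)
  | eps {x M M'} : Ctx r M M' → Ctx r (.eps x M) (.eps x M')
  | dup {x y z M M'} : Ctx r M M' → Ctx r (.dup x y z M) (.dup x y z M')
  | subL {M M' N x} : Ctx r M M' → Ctx r (.sub M N x) (.sub M' N x)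
  | subR {M N N' x} : Ctx r N N' → Ctx r (.sub M N x) (.sub M N' x)

/-- One-step σ-reduction of λ_lcf (context closure of the σ-rules). -/
def SigmaStep : Term → Term → Prop := Ctx SigmaLcf

/-- One-step Beta-reduction of λ_lcf (context closure of the Beta rule). -/
def BetaStep : Term → Term → Prop := Ctx BetaLcf

/-- One-step reduction →_lcf. -/
def LcfStep : Term → Term → Prop := Ctx (fun M N => BetaLcf M N ∨ SigmaLcf M N)

/-- The subterm relation. -/
inductive Subterm : Term → Term → Prop
  | refl (t) : Subterm t t
  | lam {s M x α} : Subterm s M → Subterm s (.lam x M α)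
  | appL {s M N α} : Subterm s M → Subterm s (.app M N α)
  | appR {s M N α} : Subterm s N → Subterm s (.app M N α)
  | eps {s x M} : Subterm s M → Subterm s (.eps x M)
  | dup {s x y z M} : Subterm s M → Subterm s (.dup x y z M)
  | subL {s M N x} : Subterm s M → Subterm s (.sub M N x)
  | subR {s M N x} : Subterm s N → Subterm s (.sub M N x)

/-- The external label of a term. -/
def elabel : Term → Lab
  | .var _ α => α
  | .lam _ _ α => α
  | .app _ _ α => α
  | .eps _ M => elabel M
  | .dup _ _ _ M => elabel M
  | .sub M _ _ => elabel M

/-- The list of labels carried by the variable, abstraction and application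
subterms of a term. -/
def labelsOf : Term → List Lab
  | .var _ α => [α]
  | .lam _ M α => α :: labelsOf M
  | .app M N α => α :: (labelsOf M ++ labelsOf N)
  | .eps _ M => labelsOf M
  | .dup _ _ _ M => labelsOf M
  | .sub M N _ => labelsOf M ++ labelsOf N

/-- A term is initialised when every variable, abstraction and application
subterm carries a single atomic label, these atomic labels are pairwise
distinct (hence no exponential markers occur). -/
def Initialised (T : Term) : Prop :=
  (∀ l ∈ labelsOf T, ∃ a, l = Lab.atom a) ∧ (labelsOf T).Nodup

/-- A label read as the sequence of its atomic symbols (atomic labels and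
exponential markers), ignoring the over/underline bracketing structure. -/
def Lab.atoms : Lab → List Lab
  | .atom a => [.atom a]
  | .comp α β => α.atoms ++ β.atoms
  | .over α => α.atoms
  | .under α => α.atoms
  | .fwd E => [.fwd E]
  | .bwd E => [.bwd E]

/-- A label read as the list of its top-level concatenation factors. -/
def Lab.factors : Lab → List Lab
  | .comp α β => α.factors ++ β.factors
  | .atom a => [.atom a]
  | .over α => [.over α]
  | .under α => [.under α]
  | .fwd E => [.fwd E]
  | .bwd E => [.bwd E]

/-- The substitution rules of λ_lca, applied at the root. -/
inductive SigmaLca : Term → Term → Prop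
  | lam {y M α N x} :
      SigmaLca (.sub (.lam y M α) N x) (.lam y (.sub M N x) α)
  | app1 {M N α P x} : x ∈ FV M →
      SigmaLca (.sub (.app M N α) P x) (.app (.sub M P x) N α)
  | app2 {M N α P x} : x ∈ FV N →
      SigmaLca (.sub (.app M N α) P x) (.app M (.sub N (pre (.fwd .quest) P) x) α)
  | cpy1 {x y z M N} :
      SigmaLca (.sub (.dup x y z M) N x)
        (.sub (.sub M (pre (.fwd .R) N) y) (pre (.fwd .S) N) z)
  | cpy2 {x y z M N x'} : x' ≠ x →
      SigmaLca (.sub (.dup x y z M) N x') (.dup x y z (.sub M N x'))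
  | ers1 {x M N} :
      SigmaLca (.sub (.eps x M) N x) M
  | ers2 {x M N x'} : x' ≠ x →
      SigmaLca (.sub (.eps x M) N x') (.eps x (.sub M N x'))
  | var {x α N} :
      SigmaLca (.sub (.var x α) N x) (pre (.comp α (.fwd .D)) N)

/-- The Beta rule of λ_lca, applied at the root:
((λx.M)^α N)^β → β·overline(α) • M[underline(α^r)·←! • N / x],
provided the argument part is closed. -/
inductive BetaLca : Term → Term → Prop
  | beta {x M α N β} : FV N = ∅ →
      BetaLca (.app (.lam x M α) N β)
        (pre (.comp β (.over α))
          (.sub M (pre (.comp (.under (Lab.rev α)) (.bwd .bang)) N) x))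

/-- One-step reduction →_lca. -/
def LcaStep : Term → Term → Prop := Ctx (fun M N => BetaLca M N ∨ SigmaLca M N)

/-!
Closedness of substitution arguments, the linearity constraints and the set of free variables
form a joint invariant of `→_lca`. Beta only creates substitutions with a closed argument, and
the σ-rules only push existing arguments inwards, duplicate or prefix them. Since every argument
is closed, `FV (M[N/x]) = FV M ∖ {x}` and pushing `[N/x]` under a binder `λy` cannot capture `y`,
so each rule preserves linearity and free variables. The invariant passes through contexts
because linearity and free variables of a term depend on its immediate subterms only through
theirs.
-/

def SubstClosed : Term → Prop
  | .var _ _ => True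
  | .lam _ M _ => SubstClosed M
  | .app M N _ => SubstClosed M ∧ SubstClosed N
  | .eps _ M => SubstClosed M
  | .dup _ _ _ M => SubstClosed M
  | .sub M N _ => FV N = ∅ ∧ SubstClosed M ∧ SubstClosed N

@[simp] lemma fv_pre (β : Lab) (T : Term) : FV (pre β T) = FV T := by
  induction T <;> simp [pre, FV, *]

@[simp] lemma substClosed_pre (β : Lab) (T : Term) : SubstClosed (pre β T) ↔ SubstClosed T := by
  induction T <;> simp [pre, SubstClosed, *]

@[simp] lemma wf_pre (β : Lab) (T : Term) : Wf (pre β T) ↔ Wf T := by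
  induction T <;> simp [pre, Wf, *]

theorem SubstClosed.of_subterm {s T : Term} (hs : Subterm s T) (hT : SubstClosed T) :
    SubstClosed s := by
  induction hs with
  | refl => exact hT
  | lam _ ih | eps _ ih | dup _ ih => exact ih hT
  | appL _ ih => exact ih hT.1
  | appR _ ih => exact ih hT.2
  | subL _ ih => exact ih hT.2.1
  | subR _ ih => exact ih hT.2.2

theorem substClosed_iff (T : Term) :
    SubstClosed T ↔ ∀ M N x, Subterm (.sub M N x) T → FV N = ∅ := by
  refine ⟨fun hT M N x hs => (hT.of_subterm hs).1, fun h => ?_⟩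
  induction T with
  | var => trivial
  | lam _ _ _ ih => exact ih fun M N x hs => h M N x hs.lam
  | eps _ _ ih => exact ih fun M N x hs => h M N x hs.eps
  | dup _ _ _ _ ih => exact ih fun M N x hs => h M N x hs.dup
  | app _ _ _ ihM ihN =>
    exact ⟨ihM fun M N x hs => h M N x hs.appL, ihN fun M N x hs => h M N x hs.appR⟩
  | sub _ _ _ ihM ihN =>
    exact ⟨h _ _ _ (.refl _), ihM fun M N x hs => h M N x hs.subL,
      ihN fun M N x hs => h M N x hs.subR⟩

def PreservesInvariants (r : Term → Term → Prop) : Prop :=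
  ∀ ⦃T T'⦄, r T T' → SubstClosed T → Wf T → SubstClosed T' ∧ Wf T' ∧ FV T' = FV T

theorem sigmaLca_preservesInvariants : PreservesInvariants SigmaLca := by
  intro T T' h hcl hwf
  cases h <;> obtain ⟨hN, _, _⟩ := hcl <;>
    simp only [Wf, FV, SubstClosed, fv_pre, wf_pre, substClosed_pre, hN] at * <;> grind

theorem betaLca_preservesInvariants : PreservesInvariants BetaLca := by
  rintro _ _ ⟨hN⟩ hcl hwf
  simp_all [Wf, FV, SubstClosed]

theorem PreservesInvariants.or {r s : Term → Term → Prop} (hr : PreservesInvariants r)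
    (hs : PreservesInvariants s) : PreservesInvariants fun T T' => r T T' ∨ s T T' := by
  rintro T T' (h | h)
  exacts [hr h, hs h]

theorem PreservesInvariants.ctx {r : Term → Term → Prop} (hr : PreservesInvariants r) :
    PreservesInvariants (Ctx r) := by
  intro T T' h
  induction h
  case base h => exact hr h
  all_goals
    intro hcl hwf
    simp only [SubstClosed, Wf, FV] at *
    grind

theorem PreservesInvariants.reflTransGen {r : Term → Term → Prop} (hr : PreservesInvariants r) :
    PreservesInvariants (Relation.ReflTransGen r) := by
  intro T T' h
  induction h with
  | refl => exact fun hcl hwf => ⟨hcl, hwf, rfl⟩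
  | tail _ hstep ih =>
    intro hcl hwf
    obtain ⟨hcl', hwf', hfv'⟩ := ih hcl hwf
    obtain ⟨hcl'', hwf'', hfv''⟩ := hr hstep hcl' hwf'
    exact ⟨hcl'', hwf'', hfv''.trans hfv'⟩

theorem lca_substitutions_closed_general (T T' : Term)
    (hNoSub : ∀ M N x, ¬ Subterm (Term.sub M N x) T)
    (hWf : Wf T)
    (hred : Relation.ReflTransGen LcaStep T T') :
    (∀ M N x, Subterm (Term.sub M N x) T' → FV N = ∅) ∧
    Wf T' ∧ FV T' = FV T := by
  have hcl : SubstClosed T := (substClosed_iff T).mpr fun M N x hs => absurd hs (hNoSub M N x)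
  have hlca : PreservesInvariants (Relation.ReflTransGen LcaStep) :=
    (betaLca_preservesInvariants.or sigmaLca_preservesInvariants).ctx.reflTransGen
  obtain ⟨hcl', hWf', hFV⟩ := hlca hred hcl hWf
  exact ⟨(substClosed_iff T').mp hcl', hWf', hFV⟩

/-- every substitution subterm arising during λ_lca reduction
of an initialised term (which in particular contains no substitution
subterms) is closed; moreover reduction preserves the linearity constraints
and the free variables. -/
theorem lca_substitutions_closed (T T' : Term)
    (hInit : Initialised T)
    (hNoSub : ∀ M N x, ¬ Subterm (Term.sub M N x) T)
    (hWf : Wf T)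
    (hred : Relation.ReflTransGen LcaStep T T') :
    (∀ M N x, Subterm (Term.sub M N x) T' → FV N = ∅) ∧
    Wf T' ∧ FV T' = FV T :=
  lca_substitutions_closed_general T T' hNoSub hWf hred
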